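/- Let $H$ be a complex Hilbert space and $\Delta$ a self-adjoint operator on $H$ with $\langle -\Delta u, u \rangle \geq 0$. Let $a$ be a bounded self-adjoint nonnegative operator, $\tau \geq 0$, $f \in H$, and suppose $\psi \in D(\Delta)$ satisfies $\Delta \psi - \tau \psi + i a \psi = -i f$. Suppose moreover there is $C_P > 0$ with $C_P(\langle -\Delta u, u\rangle + \langle a u, u \rangle) \geq \|u\|^2$ for all $u \in D(\Delta)$. Then $\|\psi\| \leq 2 C_P \|f\|$. -/
import Mathlib


open scoped InnerProductSpace

/-- Schrödinger resolvent estimate for nonnegative frequencies: if `Δ` is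
self-adjoint nonpositive, `a` bounded self-adjoint nonnegative, `τ ≥ 0`,
`ψ` solves `Δψ - τψ + i a ψ = -i f`, and the Poincaré-type coercivity
`‖u‖² ≤ C_P (⟨-Δu,u⟩ + ⟨au,u⟩)` holds, then `‖ψ‖ ≤ 2 C_P ‖f‖`. -/
theorem stmt7 {H : Type*} [NormedAddCommGroup H] [InnerProductSpace ℂ H] [CompleteSpace H]
    (Δ : H →ₗ[ℂ] H) (a : H →L[ℂ] H)
    (hΔsa : ∀ u w : H, ⟪Δ u, w⟫_ℂ = ⟪u, Δ w⟫_ℂ)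
    (hΔnonpos : ∀ u : H, (⟪Δ u, u⟫_ℂ).re ≤ 0)
    (hasa : ∀ u w : H, ⟪a u, w⟫_ℂ = ⟪u, a w⟫_ℂ)
    (hapos : ∀ u : H, 0 ≤ (⟪a u, u⟫_ℂ).re)
    (τ : ℝ) (hτ : 0 ≤ τ)
    (C_P : ℝ) (hCP : 0 < C_P)
    (hPoin : ∀ u : H, ‖u‖ ^ 2 ≤ C_P * (-(⟪Δ u, u⟫_ℂ).re + (⟪a u, u⟫_ℂ).re))
    (ψ f : H)
    (heq : Δ ψ - (τ : ℂ) • ψ + Complex.I • a ψ = (-Complex.I) • f) :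
    ‖ψ‖ ≤ 2 * C_P * ‖f‖ := by
  set z := ⟪Δ ψ, ψ⟫_ℂ with hz
  set w := ⟪a ψ, ψ⟫_ℂ with hw
  set v := ⟪f, ψ⟫_ℂ with hv
  have hzim : z.im = 0 := by
    have h : (starRingEnd ℂ) z = z := by
      rw [hz, inner_conj_symm]; exact (hΔsa ψ ψ).symm
    have h2 := congrArg Complex.im h
    simp [Complex.conj_im] at h2
    linarith
  have hwim : w.im = 0 := by
    have h : (starRingEnd ℂ) w = w := by
      rw [hw, inner_conj_symm]; exact (hasa ψ ψ).symm
    have h2 := congrArg Complex.im h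
    simp [Complex.conj_im] at h2
    linarith
  have E := congrArg (fun x => ⟪x, ψ⟫_ℂ) heq
  simp only [inner_add_left, inner_sub_left, inner_smul_left, ← hz, ← hw, ← hv,
    Complex.conj_ofReal, map_neg, Complex.conj_I, neg_neg] at E
  rw [show ⟪ψ, ψ⟫_ℂ = ((‖ψ‖ : ℂ)) ^ 2 from inner_self_eq_norm_sq_to_K ψ] at E
  have Ere := congrArg Complex.re E
  have Eim := congrArg Complex.im E
  simp only [Complex.add_re, Complex.sub_re, Complex.add_im, Complex.sub_im,
    Complex.mul_re, Complex.mul_im, Complex.neg_re, Complex.neg_im,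
    Complex.I_re, Complex.I_im, Complex.ofReal_re, Complex.ofReal_im,
    ← Complex.ofReal_pow, hzim, hwim] at Ere Eim
  ring_nf at Ere Eim
  have hnv : ‖v‖ ≤ ‖f‖ * ‖ψ‖ := norm_inner_le_norm f ψ
  have hvre : |v.re| ≤ ‖f‖ * ‖ψ‖ := (Complex.abs_re_le_norm v).trans hnv
  have hvim : |v.im| ≤ ‖f‖ * ‖ψ‖ := (Complex.abs_im_le_norm v).trans hnv
  have key : ‖ψ‖ ^ 2 ≤ C_P * (2 * (‖f‖ * ‖ψ‖)) := by
    have hP := hPoin ψ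
    rw [← hz, ← hw] at hP
    have hτψ : 0 ≤ τ * ‖ψ‖ ^ 2 := by positivity
    have h1 : -z.re ≤ ‖f‖ * ‖ψ‖ := by
      have habs := abs_le.mp hvim
      nlinarith [Ere]
    have h2 : w.re ≤ ‖f‖ * ‖ψ‖ := by
      have habs := abs_le.mp hvre
      nlinarith [Eim]
    nlinarith
  rcases eq_or_lt_of_le (norm_nonneg ψ) with h0 | h0
  · rw [← h0]; positivity
  · nlinarith [key]
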